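/- (Completion of given coprime factorizations to a doubly coprime factorization.) Let G ∈ F^{m×p}, let (M̃, Ñ) be a left coprime factorization of G over Ω and let (N, M) be a right coprime factorization of G over Ω. Then there exist stable matrices X ∈ 𝔸^{p×m}, Y ∈ 𝔸^{p×p}, X̃ ∈ 𝔸^{p×m}, Ỹ ∈ 𝔸^{m×m} such that (M, N, M̃, Ñ, X, Y, X̃, Ỹ) is a DCF of G over Ω. In particular, given block partition maps ρu : Fin p → Fin ru and ρy : Fin m → Fin ry, if M̃ is ρy-block-diagonal and M is ρu-block-diagonal, then G admits an input/output decoupled DCF over Ω. -/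

import Mathlib

open Matrix

noncomputable section

/-- The field of real rational functions. -/
abbrev F : Type := RatFunc ℝ

/-- A rational function is stable (w.r.t. stability region `Ω`) if it is proper and
every complex root of the complexification of its reduced denominator lies in `Ω`. -/
def StableF (Ω : Set ℂ) (f : F) : Prop :=
  f.intDegree ≤ 0 ∧ ∀ z : ℂ, (f.denom.map (algebraMap ℝ ℂ)).IsRoot z → z ∈ Ω

/-- A matrix over `F` is stable if all its entries are stable. -/
def MatStable (Ω : Set ℂ) {a b : Type} (M : Matrix a b F) : Prop :=
  ∀ i j, StableF Ω (M i j)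

/-- A matrix over `F` is strictly proper if every entry is `0` or has negative `intDegree`. -/
def StrictlyProper {a b : Type} (G : Matrix a b F) : Prop :=
  ∀ i j, G i j = 0 ∨ (G i j).intDegree < 0

/-- A matrix over `F` is proper if every entry has nonpositive `intDegree`. -/
def ProperM {a b : Type} (K : Matrix a b F) : Prop :=
  ∀ i j, (K i j).intDegree ≤ 0

/-- `K` stabilizes `G` if `I + G*K` is invertible and the four closed-loop
transfer matrices are stable. -/
def Stabilizes (Ω : Set ℂ) {m p : ℕ} (G : Matrix (Fin m) (Fin p) F)
    (K : Matrix (Fin p) (Fin m) F) : Prop :=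
  IsUnit (1 + G * K).det ∧
    MatStable Ω (1 + G * K)⁻¹ ∧
    MatStable Ω ((1 + G * K)⁻¹ * G) ∧
    MatStable Ω (K * (1 + G * K)⁻¹) ∧
    MatStable Ω (1 + K * G)⁻¹

/-- A doubly coprime factorization of `G` over `Ω`. -/
structure IsDCF (Ω : Set ℂ) {m p : ℕ} (G : Matrix (Fin m) (Fin p) F)
    (M : Matrix (Fin p) (Fin p) F) (N : Matrix (Fin m) (Fin p) F)
    (Mt : Matrix (Fin m) (Fin m) F) (Nt : Matrix (Fin m) (Fin p) F)
    (X : Matrix (Fin p) (Fin m) F) (Y : Matrix (Fin p) (Fin p) F)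
    (Xt : Matrix (Fin p) (Fin m) F) (Yt : Matrix (Fin m) (Fin m) F) : Prop where
  stM : MatStable Ω M
  stN : MatStable Ω N
  stMt : MatStable Ω Mt
  stNt : MatStable Ω Nt
  stX : MatStable Ω X
  stY : MatStable Ω Y
  stXt : MatStable Ω Xt
  stYt : MatStable Ω Yt
  hM : IsUnit M.det
  hMt : IsUnit Mt.det
  hLeft : G = Mt⁻¹ * Nt
  hRight : G = N * M⁻¹
  bezout : Matrix.fromBlocks Y X (-Nt) Mt * Matrix.fromBlocks M (-Xt) N Yt = 1

/-- A left coprime factorization of `G` over `Ω`. -/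
def IsLCF (Ω : Set ℂ) {m p : ℕ} (G : Matrix (Fin m) (Fin p) F)
    (Mt : Matrix (Fin m) (Fin m) F) (Nt : Matrix (Fin m) (Fin p) F) : Prop :=
  MatStable Ω Mt ∧ MatStable Ω Nt ∧ IsUnit Mt.det ∧ G = Mt⁻¹ * Nt ∧
    ∃ Xt : Matrix (Fin p) (Fin m) F, ∃ Yt : Matrix (Fin m) (Fin m) F,
      MatStable Ω Xt ∧ MatStable Ω Yt ∧ Nt * Xt + Mt * Yt = 1

/-- A right coprime factorization of `G` over `Ω`. -/
def IsRCF (Ω : Set ℂ) {m p : ℕ} (G : Matrix (Fin m) (Fin p) F)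
    (N : Matrix (Fin m) (Fin p) F) (M : Matrix (Fin p) (Fin p) F) : Prop :=
  MatStable Ω N ∧ MatStable Ω M ∧ IsUnit M.det ∧ G = N * M⁻¹ ∧
    ∃ X : Matrix (Fin p) (Fin m) F, ∃ Y : Matrix (Fin p) (Fin p) F,
      MatStable Ω X ∧ MatStable Ω Y ∧ Y * M + X * N = 1

/-- Evaluation of a rational function at a complex point (complexified num/denom). -/
def evalC (z : ℂ) (f : F) : ℂ :=
  (f.num.map (algebraMap ℝ ℂ)).eval z / (f.denom.map (algebraMap ℝ ℂ)).eval z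

/-!
The stable rational functions form a subring `𝔸` of `F`, so stability of matrices is preserved
by sums and products. The two factorizations of `G` give `Ñ M = M̃ N`, and with the Bézout
identities `Y₀ M + X₀ N = I`, `Ñ X̃₀ + M̃ Ỹ₀ = I` this yields
`[[Y₀, X₀], [-Ñ, M̃]] * [[M, -X̃₀], [N, Ỹ₀]] = [[I, -Λ], [0, I]]` with `Λ = Y₀ X̃₀ - X₀ Ỹ₀`.
Multiplying on the right by `[[I, Λ], [0, I]]` replaces `X̃₀, Ỹ₀` by the stable matrices
`X̃₀ - M Λ, Ỹ₀ + N Λ` and makes the product the identity. The completed DCF keeps `M` and `M̃`,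
so it is input/output decoupled as soon as they are block-diagonal.
-/

section StableSubring

variable {Ω : Set ℂ}

theorem denom_roots_mem_of_denom_dvd {f g h : F}
    (hf : ∀ z : ℂ, (f.denom.map (algebraMap ℝ ℂ)).IsRoot z → z ∈ Ω)
    (hg : ∀ z : ℂ, (g.denom.map (algebraMap ℝ ℂ)).IsRoot z → z ∈ Ω)
    (hd : h.denom ∣ f.denom * g.denom) (z : ℂ)
    (hz : (h.denom.map (algebraMap ℝ ℂ)).IsRoot z) : z ∈ Ω := by
  obtain ⟨c, hc⟩ := Polynomial.map_dvd (algebraMap ℝ ℂ) hd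
  rw [Polynomial.map_mul] at hc
  have hfg : (f.denom.map (algebraMap ℝ ℂ) * g.denom.map (algebraMap ℝ ℂ)).IsRoot z := by
    rw [Polynomial.IsRoot, hc, Polynomial.eval_mul, hz.eq_zero, zero_mul]
  rcases Polynomial.root_mul.mp hfg with hzf | hzg
  exacts [hf z hzf, hg z hzg]

theorem stableF_of_denom_eq_one {f : F} (hdeg : f.intDegree ≤ 0) (hd : f.denom = 1) :
    StableF Ω f :=
  ⟨hdeg, fun z hz => by simp [hd, Polynomial.IsRoot] at hz⟩

theorem StableF.add {f g : F} (hf : StableF Ω f) (hg : StableF Ω g) : StableF Ω (f + g) := by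
  refine ⟨?_, denom_roots_mem_of_denom_dvd hf.2 hg.2 (RatFunc.denom_add_dvd f g)⟩
  rcases eq_or_ne g 0 with rfl | hg0
  · simpa using hf.1
  rcases eq_or_ne (f + g) 0 with hfg | hfg
  · simp [hfg]
  exact (RatFunc.intDegree_add_le hg0 hfg).trans (max_le hf.1 hg.1)

theorem StableF.mul {f g : F} (hf : StableF Ω f) (hg : StableF Ω g) : StableF Ω (f * g) := by
  refine ⟨?_, denom_roots_mem_of_denom_dvd hf.2 hg.2 (RatFunc.denom_mul_dvd f g)⟩
  rcases eq_or_ne f 0 with rfl | hf0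
  · simp
  rcases eq_or_ne g 0 with rfl | hg0
  · simp
  rw [RatFunc.intDegree_mul hf0 hg0]
  exact add_nonpos hf.1 hg.1

theorem StableF.neg {f : F} (hf : StableF Ω f) : StableF Ω (-f) := by
  have hneg_one : StableF Ω (-1 : F) := by
    refine stableF_of_denom_eq_one (by simp) ?_
    simpa using RatFunc.denom_algebraMap (-1 : Polynomial ℝ)
  simpa using hneg_one.mul hf

variable (Ω) in
def stableSubring : Subring F where
  carrier := {f | StableF Ω f}
  zero_mem' := stableF_of_denom_eq_one (by simp) RatFunc.denom_zero
  one_mem' := stableF_of_denom_eq_one (by simp) RatFunc.denom_one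
  add_mem' := StableF.add
  mul_mem' := StableF.mul
  neg_mem' := StableF.neg

end StableSubring

namespace MatStable

variable {Ω : Set ℂ} {a b c : Type}

theorem add {A B : Matrix a b F} (hA : MatStable Ω A) (hB : MatStable Ω B) :
    MatStable Ω (A + B) :=
  fun i j => (stableSubring Ω).add_mem (hA i j) (hB i j)

theorem sub {A B : Matrix a b F} (hA : MatStable Ω A) (hB : MatStable Ω B) :
    MatStable Ω (A - B) :=
  fun i j => (stableSubring Ω).sub_mem (hA i j) (hB i j)

theorem mul [Fintype b] {A : Matrix a b F} {B : Matrix b c F}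
    (hA : MatStable Ω A) (hB : MatStable Ω B) : MatStable Ω (A * B) :=
  fun i j => (stableSubring Ω).sum_mem fun k _ => (stableSubring Ω).mul_mem (hA i k) (hB k j)

end MatStable

theorem mul_eq_mul_of_inv_mul_eq_mul_inv {R m n : Type*} [CommRing R]
    [Fintype m] [Fintype n] [DecidableEq m] [DecidableEq n]
    {Mt : Matrix m m R} {Nt N : Matrix m n R} {M : Matrix n n R}
    (hMt : IsUnit Mt.det) (hM : IsUnit M.det) (h : Mt⁻¹ * Nt = N * M⁻¹) :
    Nt * M = Mt * N := by
  calc Nt * M = Mt * (Mt⁻¹ * Nt) * M := by rw [mul_nonsing_inv_cancel_left _ _ hMt]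
    _ = Mt * N := by
      rw [h, Matrix.mul_assoc, nonsing_inv_mul_cancel_right _ _ hM]

theorem fromBlocks_mul_fromBlocks_eq_one_of_bezout {R l n : Type*} [Ring R]
    [Fintype l] [Fintype n] [DecidableEq l] [DecidableEq n]
    {M : Matrix l l R} {N : Matrix n l R} {Mt : Matrix n n R} {Nt : Matrix n l R}
    {X : Matrix l n R} {Y : Matrix l l R} {Xt : Matrix l n R} {Yt : Matrix n n R}
    (hR : Y * M + X * N = 1) (hL : Nt * Xt + Mt * Yt = 1) (hcomm : Nt * M = Mt * N) :
    fromBlocks Y X (-Nt) Mt *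
        fromBlocks M (-(Xt - M * (Y * Xt - X * Yt))) N (Yt + N * (Y * Xt - X * Yt)) = 1 := by
  set Λ := Y * Xt - X * Yt
  have h12 : Y * -(Xt - M * Λ) + X * (Yt + N * Λ) = 0 := by
    calc Y * -(Xt - M * Λ) + X * (Yt + N * Λ) = (Y * M + X * N) * Λ - Λ := by
          simp only [Λ, Matrix.mul_neg, Matrix.mul_sub, Matrix.mul_add, Matrix.add_mul,
            Matrix.mul_assoc]
          abel
      _ = 0 := by rw [hR, Matrix.one_mul, sub_self]
  have h21 : -Nt * M + Mt * N = 0 := by rw [Matrix.neg_mul, hcomm, neg_add_cancel]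
  have h22 : -Nt * -(Xt - M * Λ) + Mt * (Yt + N * Λ) = 1 := by
    calc -Nt * -(Xt - M * Λ) + Mt * (Yt + N * Λ)
        = (Nt * Xt + Mt * Yt) + (Mt * N - Nt * M) * Λ := by
          simp only [Matrix.neg_mul, Matrix.mul_neg, Matrix.mul_sub, Matrix.mul_add,
            Matrix.sub_mul, Matrix.mul_assoc]
          abel
      _ = 1 := by rw [hL, hcomm, sub_self, Matrix.zero_mul, add_zero]
  rw [fromBlocks_multiply, hR, h12, h21, h22, fromBlocks_one]

theorem exists_isDCF_of_isLCF_of_isRCF {Ω : Set ℂ} {m p : ℕ} {G : Matrix (Fin m) (Fin p) F}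
    {Mt : Matrix (Fin m) (Fin m) F} {Nt : Matrix (Fin m) (Fin p) F}
    {N : Matrix (Fin m) (Fin p) F} {M : Matrix (Fin p) (Fin p) F}
    (hL : IsLCF Ω G Mt Nt) (hR : IsRCF Ω G N M) :
    ∃ (X : Matrix (Fin p) (Fin m) F) (Y : Matrix (Fin p) (Fin p) F)
      (Xt : Matrix (Fin p) (Fin m) F) (Yt : Matrix (Fin m) (Fin m) F),
      IsDCF Ω G M N Mt Nt X Y Xt Yt := by
  obtain ⟨hsMt, hsNt, hMt, hGL, Xt₀, Yt₀, hsXt₀, hsYt₀, hbezL⟩ := hL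
  obtain ⟨hsN, hsM, hM, hGR, X₀, Y₀, hsX₀, hsY₀, hbezR⟩ := hR
  have hcomm : Nt * M = Mt * N := mul_eq_mul_of_inv_mul_eq_mul_inv hMt hM (hGL ▸ hGR)
  have hsΛ : MatStable Ω (Y₀ * Xt₀ - X₀ * Yt₀) := (hsY₀.mul hsXt₀).sub (hsX₀.mul hsYt₀)
  exact ⟨X₀, Y₀, _, _, hsM, hsN, hsMt, hsNt, hsX₀, hsY₀, hsXt₀.sub (hsM.mul hsΛ),
    hsYt₀.add (hsN.mul hsΛ), hM, hMt, hGL, hGR,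
    fromBlocks_mul_fromBlocks_eq_one_of_bezout hbezR hbezL hcomm⟩

/-- **Completion of coprime factorizations to a DCF.** If `(M̃, Ñ)` is an LCF and `(N, M)` an
RCF of `G` over `Ω`, then there are stable `X, Y, X̃, Ỹ` making `(M, N, M̃, Ñ, X, Y, X̃, Ỹ)`
a DCF of `G` over `Ω`. In particular, if `M̃` is `ρy`-block-diagonal and `M` is
`ρu`-block-diagonal, then `G` admits an input/output decoupled DCF over `Ω`. -/
theorem completion_to_dcf (Ω : Set ℂ) (m p : ℕ)
    (G : Matrix (Fin m) (Fin p) F)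
    (Mt : Matrix (Fin m) (Fin m) F) (Nt : Matrix (Fin m) (Fin p) F)
    (hL : IsLCF Ω G Mt Nt)
    (N : Matrix (Fin m) (Fin p) F) (M : Matrix (Fin p) (Fin p) F)
    (hR : IsRCF Ω G N M) :
    (∃ (X : Matrix (Fin p) (Fin m) F) (Y : Matrix (Fin p) (Fin p) F)
        (Xt : Matrix (Fin p) (Fin m) F) (Yt : Matrix (Fin m) (Fin m) F),
        IsDCF Ω G M N Mt Nt X Y Xt Yt) ∧
    (∀ (ru ry : ℕ) (ρu : Fin p → Fin ru) (ρy : Fin m → Fin ry),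
      (∀ i j, ρy i ≠ ρy j → Mt i j = 0) →
      (∀ i j, ρu i ≠ ρu j → M i j = 0) →
      ∃ (M' : Matrix (Fin p) (Fin p) F) (N' : Matrix (Fin m) (Fin p) F)
        (Mt' : Matrix (Fin m) (Fin m) F) (Nt' : Matrix (Fin m) (Fin p) F)
        (X : Matrix (Fin p) (Fin m) F) (Y : Matrix (Fin p) (Fin p) F)
        (Xt : Matrix (Fin p) (Fin m) F) (Yt : Matrix (Fin m) (Fin m) F),
        IsDCF Ω G M' N' Mt' Nt' X Y Xt Yt ∧
        (∀ i j, ρu i ≠ ρu j → M' i j = 0) ∧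
        (∀ i j, ρy i ≠ ρy j → Mt' i j = 0)) := by
  have hDCF := exists_isDCF_of_isLCF_of_isRCF hL hR
  refine ⟨hDCF, fun ru ry ρu ρy hMt hM => ?_⟩
  obtain ⟨X, Y, Xt, Yt, hXY⟩ := hDCF
  exact ⟨M, N, Mt, Nt, X, Y, Xt, Yt, hXY, hM, hMt⟩
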